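/- For p ∈ (10/3, 6), r, λ > 0, any u ∈ H¹(ℝ³) with ∫u² = r and ∫|∇u|² + (q/4)∫φ_u u² − (3(p−2)/(2p)) λ ∫|u|^p = 0 and u ≠ 0 satisfies ∫|∇u|² ≥ K^{4/(10−3p)} (3(p−2)λ/(2p))^{4/(10−3p)} r^{(6−p)/(10−3p)}, where K is the Gagliardo–Nirenberg constant for exponent p. (Note 10−3p < 0, so the exponents reverse the inequality direction compared to p < 10/3.) -/

import Mathlib

open MeasureTheory

noncomputable section

abbrev E3 := EuclideanSpace ℝ (Fin 3)

/-- `∫ |∇u|²` -/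
def gradInt (u : E3 → ℝ) : ℝ := ∫ x, ‖fderiv ℝ u x‖ ^ 2

/-- The Coulomb potential `φ_u = |·|⁻¹ * u²`. -/
def phiFun (u : E3 → ℝ) (x : E3) : ℝ := ∫ y, (u y) ^ 2 / ‖x - y‖

/-- `∫ φ_u u²` -/
def phiInt (u : E3 → ℝ) : ℝ := ∫ x, phiFun u x * (u x) ^ 2

/-- `∫ |u|^p` -/
def pInt (p : ℝ) (u : E3 → ℝ) : ℝ := ∫ x, |u x| ^ p

/-- `∫ u²` -/
def massInt (u : E3 → ℝ) : ℝ := ∫ x, (u x) ^ 2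

/-- Membership in `H¹(ℝ³)`. -/
def H1 (u : E3 → ℝ) : Prop :=
  MemLp u 2 volume ∧ Differentiable ℝ u ∧ MemLp (fun x => ‖fderiv ℝ u x‖) 2 volume

/-!
On the Nehari set, dropping the nonnegative Coulomb term and applying Gagliardo–Nirenberg gives
`G ≤ C G^α` for `G = ∫|∇u|²` and `α = 3(p-2)/4`. For `p > 10/3` we have `α > 1`, so once `G > 0`
this inverts to `G ≥ C^(1/(1-α))`, with `1/(1-α) = 4/(10-3p) < 0`. Positivity of `G` comes from
applying Gagliardo–Nirenberg to `arctan ∘ u`, whose Dirichlet energy is at most that of `u`.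
-/

namespace Real

lemma arctan_le_self_of_nonneg {t : ℝ} (ht : 0 ≤ t) : arctan t ≤ t :=
  (le_tan (arctan_nonneg.2 ht) (arctan_lt_pi_div_two t)).trans_eq (tan_arctan t)

lemma abs_arctan_le_abs (t : ℝ) : |arctan t| ≤ |t| := by
  have h := arctan_le_self_of_nonneg (abs_nonneg t)
  refine abs_le.2 ⟨?_, (arctan_le_arctan_iff.2 (le_abs_self t)).trans h⟩
  linarith [arctan_le_arctan_iff.2 (neg_abs_le t), arctan_neg |t|]

lemma abs_arctan_rpow_le {p : ℝ} (hp : 2 ≤ p) (t : ℝ) :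
    |arctan t| ^ p ≤ (π / 2) ^ (p - 2) * t ^ 2 := by
  have hpi : |arctan t| ≤ π / 2 :=
    abs_le.2 ⟨(neg_pi_div_two_lt_arctan t).le, (arctan_lt_pi_div_two t).le⟩
  calc |arctan t| ^ p = |arctan t| ^ (p - 2) * |arctan t| ^ 2 := by
        rw [← rpow_natCast, ← rpow_add' (abs_nonneg _) (by norm_num; linarith)]
        norm_num
    _ ≤ (π / 2) ^ (p - 2) * |t| ^ 2 :=
        mul_le_mul (rpow_le_rpow (abs_nonneg _) hpi (by linarith))
          (pow_le_pow_left₀ (abs_nonneg _) (abs_arctan_le_abs t) 2)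
          (by positivity) (by positivity)
    _ = (π / 2) ^ (p - 2) * t ^ 2 := by rw [sq_abs]

lemma rpow_inv_one_sub_le_of_le_mul_rpow {G C α : ℝ} (hG : 0 < G) (hα : 1 < α)
    (h : G ≤ C * G ^ α) : C ^ (1 - α)⁻¹ ≤ G := by
  have hGα : 0 < G ^ α := rpow_pos_of_pos hG α
  have hle : G ^ (1 - α) ≤ C := by
    refine le_of_mul_le_mul_right ?_ hGα
    rwa [← rpow_add hG, sub_add_cancel, rpow_one]
  calc C ^ (1 - α)⁻¹ ≤ (G ^ (1 - α)) ^ (1 - α)⁻¹ :=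
        rpow_le_rpow_of_nonpos (rpow_pos_of_pos hG _) hle (inv_nonpos.2 (by linarith))
    _ = G := by rw [← rpow_mul hG.le, mul_inv_cancel₀ (by linarith), rpow_one]

end Real

open Real

lemma norm_fderiv_arctan_comp_le {F : Type*} [NormedAddCommGroup F] [NormedSpace ℝ F]
    {u : F → ℝ} (hu : Differentiable ℝ u) (x : F) :
    ‖fderiv ℝ (fun x => arctan (u x)) x‖ ≤ ‖fderiv ℝ u x‖ := by
  rw [fderiv_arctan (hu x), norm_smul, Real.norm_eq_abs, abs_of_pos (by positivity)]
  refine mul_le_of_le_one_left (norm_nonneg _) ?_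
  rw [div_le_one (by positivity)]
  nlinarith [sq_nonneg (u x)]

lemma H1.arctan_comp {u : E3 → ℝ} (hu : H1 u) : H1 fun x => arctan (u x) := by
  obtain ⟨hu2, hud, hgrad⟩ := hu
  refine ⟨hu2.of_le (continuous_arctan.comp hud.continuous).aestronglyMeasurable
    (.of_forall fun x => by simpa only [Real.norm_eq_abs] using abs_arctan_le_abs (u x)),
    hud.arctan, hgrad.of_le ?_ (.of_forall fun x => ?_)⟩
  · exact (measurable_fderiv ℝ _).norm.aestronglyMeasurable
  · simpa only [norm_norm] using norm_fderiv_arctan_comp_le hud x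

lemma gradInt_arctan_comp_le {u : E3 → ℝ} (hu : H1 u) :
    gradInt (fun x => arctan (u x)) ≤ gradInt u :=
  integral_mono_of_nonneg (.of_forall fun _ => by positivity) hu.2.2.integrable_sq
    (.of_forall fun x => pow_le_pow_left₀ (norm_nonneg _) (norm_fderiv_arctan_comp_le hu.2.1 x) 2)

lemma pInt_arctan_comp_pos {p : ℝ} (hp : 2 ≤ p) {u : E3 → ℝ} (hu : MemLp u 2 volume)
    (hmass : 0 < massInt u) : 0 < pInt p fun x => arctan (u x) := by
  have hint : Integrable (fun x => |arctan (u x)| ^ p) volume := by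
    refine (hu.integrable_sq.const_mul ((π / 2) ^ (p - 2))).mono'
      ((continuous_arctan.abs.rpow_const fun _ => Or.inr (by linarith)).comp_aestronglyMeasurable
        hu.aestronglyMeasurable) (.of_forall fun x => ?_)
    rw [Real.norm_eq_abs, abs_of_nonneg (by positivity)]
    exact abs_arctan_rpow_le hp (u x)
  have hsupp :
      Function.support (fun x => |arctan (u x)| ^ p) = Function.support fun x => u x ^ 2 := by
    ext x
    simp [Function.support, rpow_eq_zero (abs_nonneg _) (by linarith : p ≠ 0), arctan_eq_zero_iff]
  unfold massInt at hmass
  rw [integral_pos_iff_support_of_nonneg (fun _ => by positivity) hu.integrable_sq] at hmass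
  unfold pInt
  rwa [integral_pos_iff_support_of_nonneg (fun _ => by positivity) hint, hsupp]

-- Applied to `u` itself the inequality says nothing when `|u|^p` is not integrable (then `pInt` is
-- the junk value `0`), so it is applied to the bounded function `arctan ∘ u`.
lemma gradInt_pos_of_gagliardoNirenberg {p K a b : ℝ} (hp : 2 ≤ p) (ha : a ≠ 0)
    (hGN : ∀ v : E3 → ℝ, H1 v → pInt p v ≤ K * gradInt v ^ a * massInt v ^ b)
    {u : E3 → ℝ} (hu : H1 u) (hmass : 0 < massInt u) : 0 < gradInt u := by
  by_contra! hG
  have hv : gradInt (fun x => arctan (u x)) = 0 :=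
    le_antisymm ((gradInt_arctan_comp_le hu).trans hG) (integral_nonneg fun _ => by positivity)
  have hGNv := hGN _ hu.arctan_comp
  rw [hv, zero_rpow ha, mul_zero, zero_mul] at hGNv
  exact hGNv.not_gt (pInt_arctan_comp_pos hp hu.1 hmass)

lemma phiInt_nonneg (u : E3 → ℝ) : 0 ≤ phiInt u :=
  integral_nonneg fun _ => mul_nonneg (integral_nonneg fun _ => by positivity) (sq_nonneg _)

theorem stmt8_general (q lam r p K : ℝ) (hq : 0 < q) (hlam : 0 < lam) (hr : 0 < r)
    (hp1 : 10 / 3 < p) (hK : 0 < K)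
    (hGN : ∀ v : E3 → ℝ, H1 v →
      pInt p v ≤ K * (gradInt v) ^ (3 * (p - 2) / 4) * (massInt v) ^ ((6 - p) / 4))
    (u : E3 → ℝ) (hu : H1 u) (hmass : massInt u = r)
    (hNehari : gradInt u + (q / 4) * phiInt u
        - (3 * (p - 2) / (2 * p)) * lam * pInt p u = 0) :
    gradInt u ≥ K ^ (4 / (10 - 3 * p)) * (3 * (p - 2) * lam / (2 * p)) ^ (4 / (10 - 3 * p))
      * r ^ ((6 - p) / (10 - 3 * p)) := by
  have hp : 0 < p := by linarith
  have hc : 0 ≤ 3 * (p - 2) * lam / (2 * p) :=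
    div_nonneg (mul_nonneg (by linarith) hlam.le) (by linarith)
  have hG := gradInt_pos_of_gagliardoNirenberg (by linarith) (by linarith) hGN hu (hmass ▸ hr)
  have hkey : gradInt u ≤ K * (3 * (p - 2) * lam / (2 * p)) * r ^ ((6 - p) / 4)
      * gradInt u ^ (3 * (p - 2) / 4) :=
    calc gradInt u ≤ 3 * (p - 2) * lam / (2 * p) * pInt p u := by
          have := mul_nonneg hq.le (phiInt_nonneg u)
          rw [mul_div_right_comm, mul_right_comm]
          linarith
      _ ≤ 3 * (p - 2) * lam / (2 * p)
            * (K * gradInt u ^ (3 * (p - 2) / 4) * massInt u ^ ((6 - p) / 4)) :=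
          mul_le_mul_of_nonneg_left (hGN u hu) hc
      _ = _ := by rw [hmass]; ring
  have hexp : (1 - 3 * (p - 2) / 4)⁻¹ = 4 / (10 - 3 * p) := by
    rw [inv_eq_one_div]; field_simp; ring
  have h := rpow_inv_one_sub_le_of_le_mul_rpow hG (by linarith) hkey
  rwa [hexp, mul_rpow (by positivity) (by positivity), mul_rpow hK.le hc, ← rpow_mul hr.le,
    show (6 - p) / 4 * (4 / (10 - 3 * p)) = (6 - p) / (10 - 3 * p) by field_simp] at h

/-- For `p ∈ (10/3, 6)`, any nonzero `u ∈ H¹(ℝ³)` in the Nehari-type set with `∫u² = r`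
satisfies `∫|∇u|² ≥ K^(4/(10-3p)) (3(p-2)λ/(2p))^(4/(10-3p)) r^((6-p)/(10-3p))`. -/
theorem stmt8 (q lam r p K : ℝ) (hq : 0 < q) (hlam : 0 < lam) (hr : 0 < r)
    (hp1 : 10 / 3 < p) (hp2 : p < 6) (hK : 0 < K)
    (hGN : ∀ v : E3 → ℝ, H1 v →
      pInt p v ≤ K * (gradInt v) ^ (3 * (p - 2) / 4) * (massInt v) ^ ((6 - p) / 4))
    (u : E3 → ℝ) (hu : H1 u) (hne : u ≠ 0) (hmass : massInt u = r)
    (hNehari : gradInt u + (q / 4) * phiInt u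
        - (3 * (p - 2) / (2 * p)) * lam * pInt p u = 0) :
    gradInt u ≥ K ^ (4 / (10 - 3 * p)) * (3 * (p - 2) * lam / (2 * p)) ^ (4 / (10 - 3 * p))
      * r ^ ((6 - p) / (10 - 3 * p)) :=
  stmt8_general q lam r p K hq hlam hr hp1 hK hGN u hu hmass hNehari

end
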